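/- (Casorati determinant D_3, type q-A_4^{(1)}.) Suppose Y, Ȳ ∈ ℂ[[X]] satisfy both (1−a_1X)(1−a_2X)·Y(qX) = (1−b_1X)·Y and (1−a_1X)·Ȳ = (1−b_1X)·Y, let (P, Q) be a Padé pair for Y and (P̄, Q̄) a Padé pair for Ȳ. Then there exists a constant c ∈ ℂ such that (1−a_2X)·P(qX)·Q̄(X) − P̄(X)·Q(qX) = c·X^{m+n+1}. -/

import Mathlib

/-!
Cancelling the unit `1 - a₁X` from the two relations gives `Ȳ = (1 - a₂X) Y(qX)`. Then the
determinant equals `Q(qX) (Ȳ Q̄ - P̄) - (1 - a₂X) Q̄ (Y(qX) Q(qX) - P(qX))`, and both terms are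
divisible by `X^(m+n+1)`, the second because rescaling preserves the `X`-adic order. A polynomial
of degree at most `m + n + 1` divisible by `X^(m+n+1)` is a constant multiple of it.
-/

open Polynomial

namespace Polynomial

variable {R : Type*} [CommSemiring R]

lemma coe_comp_C_mul_X (p : R[X]) (r : R) :
    ((p.comp (C r * X) : R[X]) : PowerSeries R) = PowerSeries.rescale r p := by
  ext k
  rw [coeff_coe, PowerSeries.coeff_rescale, coeff_coe, comp_C_mul_X_coeff, mul_comm]

lemma degree_comp_C_mul_X_le {p : R[X]} {m : ℕ} (r : R) (h : p.degree ≤ m) :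
    (p.comp (C r * X)).degree ≤ m :=
  (degree_le_iff_coeff_zero _ _).2 fun k hk => by
    rw [comp_C_mul_X_coeff, (degree_le_iff_coeff_zero _ _).1 h k hk, zero_mul]

lemma eq_C_mul_X_pow_of_degree_le_of_X_pow_dvd_coe {p : R[X]} {N : ℕ} (hdeg : p.degree ≤ N)
    (hdvd : (PowerSeries.X : PowerSeries R) ^ N ∣ (p : PowerSeries R)) :
    p = C (p.coeff N) * X ^ N := by
  ext i
  rw [coeff_C_mul_X_pow]
  rcases lt_trichotomy i N with h | rfl | h
  · rw [if_neg h.ne, ← coeff_coe]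
    exact PowerSeries.X_pow_dvd_iff.1 hdvd i h
  · rw [if_pos rfl]
  · rw [if_neg h.ne']
    exact coeff_eq_zero_of_degree_lt (hdeg.trans_lt (by exact_mod_cast h))

end Polynomial

namespace PowerSeries

variable {R : Type*} [CommRing R]

lemma isUnit_one_sub_C_mul_X (a : R) : IsUnit (1 - C a * X : PowerSeries R) := by
  simp [isUnit_iff_constantCoeff]

lemma X_pow_dvd_rescale {f : PowerSeries R} {N : ℕ} (r : R) (h : X ^ N ∣ f) :
    X ^ N ∣ rescale r f := by
  obtain ⟨g, rfl⟩ := h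
  exact ⟨C r ^ N * rescale r g, by rw [map_mul, map_pow, rescale_X]; ring⟩

lemma X_pow_dvd_casorati {N : ℕ} (q : R) {A Y Ybar P Q Pbar Qbar : PowerSeries R}
    (hYbar : Ybar = A * rescale q Y) (hPade : X ^ N ∣ Y * Q - P)
    (hPadebar : X ^ N ∣ Ybar * Qbar - Pbar) :
    X ^ N ∣ A * rescale q P * Qbar - Pbar * rescale q Q := by
  have hPade_q : X ^ N ∣ rescale q Y * rescale q Q - rescale q P := by
    simpa only [map_sub, map_mul] using X_pow_dvd_rescale q hPade
  have h := dvd_sub (hPadebar.mul_left (rescale q Q)) (hPade_q.mul_left (A * Qbar))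
  convert h using 1
  rw [hYbar]
  ring

end PowerSeries

/-- Casorati determinant `D_3` for type q-A_4^{(1)}. -/
theorem casorati_D3_qA4
    (q a1 a2 b1 : ℂ) (m n : ℕ)
    (Y Ybar : PowerSeries ℂ)
    (hY : (1 - PowerSeries.C a1 * PowerSeries.X) * (1 - PowerSeries.C a2 * PowerSeries.X) *
        PowerSeries.rescale q Y =
      (1 - PowerSeries.C b1 * PowerSeries.X) * Y)
    (hYY : (1 - PowerSeries.C a1 * PowerSeries.X) * Ybar =
      (1 - PowerSeries.C b1 * PowerSeries.X) * Y)
    (P Q : Polynomial ℂ) (hdP : P.degree ≤ m) (hdQ : Q.degree ≤ n)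
    (hPade : (PowerSeries.X : PowerSeries ℂ) ^ (m + n + 1) ∣
      Y * (Q : PowerSeries ℂ) - (P : PowerSeries ℂ))
    (Pbar Qbar : Polynomial ℂ) (hdPbar : Pbar.degree ≤ m) (hdQbar : Qbar.degree ≤ n)
    (hPadebar : (PowerSeries.X : PowerSeries ℂ) ^ (m + n + 1) ∣
      Ybar * (Qbar : PowerSeries ℂ) - (Pbar : PowerSeries ℂ)) :
    ∃ c : ℂ,
      (1 - C a2 * X) * (P.comp (C q * X)) * Qbar - Pbar * (Q.comp (C q * X)) =
        C c * X ^ (m + n + 1) := by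
  have hYbar : Ybar = (1 - PowerSeries.C a2 * PowerSeries.X) * PowerSeries.rescale q Y :=
    (PowerSeries.isUnit_one_sub_C_mul_X a1).mul_left_cancel (by rw [hYY, ← mul_assoc, hY])
  set D := (1 - C a2 * X) * (P.comp (C q * X)) * Qbar - Pbar * (Q.comp (C q * X))
  have hdvd : PowerSeries.X ^ (m + n + 1) ∣ (D : PowerSeries ℂ) := by
    push_cast [D, coe_comp_C_mul_X]
    exact PowerSeries.X_pow_dvd_casorati q hYbar hPade hPadebar
  have hdeg : D.degree ≤ ↑(m + n + 1) := by
    have h1 : (1 - C a2 * X : ℂ[X]).degree ≤ 1 := by compute_degree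
    refine (degree_sub_le_of_le (a := ↑(m + n + 1)) (b := ↑(m + n + 1)) ?_ ?_).trans (max_self _).le
    · exact (degree_mul_le_of_le (degree_mul_le_of_le h1 (degree_comp_C_mul_X_le q hdP))
        hdQbar).trans (by norm_cast; omega)
    · exact (degree_mul_le_of_le hdPbar (degree_comp_C_mul_X_le q hdQ)).trans
        (by norm_cast; omega)
  exact ⟨_, eq_C_mul_X_pow_of_degree_le_of_X_pow_dvd_coe hdeg hdvd⟩
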